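/- arXiv:2001.00993 — 2 statements merged into one kernel-verified Lean document; each statement's English description precedes it below -/
import Mathlib

section
/- Let Γ ⊂ ℝ^n be an open convex symmetric cone with vertex at the origin satisfying Γ_n ⊆ Γ ⊆ Γ_1. Then there exists a unique t ∈ [0, n-1] such that (-t, 1, ..., 1) ∈ ∂Γ. -/
/-!
Restrict `Γ` to the affine line `t ↦ (-t, 1, ..., 1)`. The parameters of the points in `Γ` form an
open convex subset of `ℝ`; it contains `(-∞, 0)` because `Γ_n ⊆ Γ`, and lies in `(-∞, n - 1)`
because `Γ ⊆ Γ_1` and the coordinates of `(-t, 1, ..., 1)` sum to `n - 1 - t`. Hence it is an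
interval `(-∞, b)` with `0 ≤ b ≤ n - 1`. Since `Γ` is open and convex, every point of `closure Γ`
on the line is a limit of points of `Γ` on the line (join it to one of them by a segment), so the
line meets `∂Γ` exactly at the boundary point `b` of that interval.
-/

open Set

/-- The vector `(-t, 1, ..., 1)`. -/
def vecT (n : ℕ) (t : ℝ) : Fin n → ℝ := fun i => if i.val = 0 then -t else 1

theorem Convex.preimage_frontier_eq_frontier_preimage
    {E F : Type*} [AddCommGroup E] [Module ℝ E] [TopologicalSpace E] [ContinuousAdd E]
    [ContinuousSMul ℝ E] [AddCommGroup F] [Module ℝ F] [TopologicalSpace F]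
    [IsTopologicalAddGroup F] [ContinuousSMul ℝ F] {s : Set F} (hconv : Convex ℝ s)
    (hopen : IsOpen s) (f : E →ᵃ[ℝ] F) (hf : Continuous f) (hne : (f ⁻¹' s).Nonempty) :
    f ⁻¹' frontier s = frontier (f ⁻¹' s) := by
  obtain ⟨y, hy⟩ := hne
  rw [hopen.frontier_eq, (hopen.preimage hf).frontier_eq, preimage_sdiff]
  refine congrArg (· \ _) (subset_antisymm (fun x hx => ?_) (hf.closure_preimage_subset s))
  have hseg : openSegment ℝ y x ⊆ f ⁻¹' s := by
    rw [← image_subset_iff, image_openSegment]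
    refine (hconv.openSegment_interior_closure_subset_interior ?_ hx).trans interior_subset
    rwa [hopen.interior_eq]
  exact closure_mono hseg (segment_subset_closure_openSegment (right_mem_segment ℝ y x))

theorem IsOpen.eq_Iio_csSup {α : Type*} [ConditionallyCompleteLinearOrder α] [TopologicalSpace α]
    [OrderTopology α] [DenselyOrdered α] [NoMaxOrder α] {s : Set α} (hopen : IsOpen s)
    (hconn : IsPreconnected s) (hbelow : ¬BddBelow s) (habove : BddAbove s) :
    s = Iio (sSup s) :=
  subset_antisymm (interior_Iic (a := sSup s) ▸ interior_maximal (fun _ => le_csSup habove) hopen)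
    (hconn.Iio_csSup_subset hbelow habove)

theorem vecT_eq_lineMap (n : ℕ) : vecT n = AffineMap.lineMap (k := ℝ) (vecT n 0) (vecT n 1) := by
  ext t i
  simp only [vecT, AffineMap.lineMap_apply_module, Pi.add_apply, Pi.smul_apply, smul_eq_mul]
  split_ifs <;> ring

theorem vecT_pos_of_neg (n : ℕ) {t : ℝ} (ht : t < 0) (i : Fin n) : 0 < vecT n t i := by
  unfold vecT
  split_ifs <;> linarith

theorem sum_vecT (n : ℕ) (hn : 1 ≤ n) (t : ℝ) : ∑ i, vecT n t i = (n : ℝ) - 1 - t := by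
  obtain ⟨m, rfl⟩ := Nat.exists_eq_add_of_le' hn
  simp [Fin.sum_univ_succ, vecT, neg_add_eq_sub]

theorem exists_unique_muPlus_general (n : ℕ) (hn : 1 ≤ n) (Γ : Set (Fin n → ℝ))
    (hopen : IsOpen Γ) (hconv : Convex ℝ Γ)
    (hsub : {x : Fin n → ℝ | ∀ i, 0 < x i} ⊆ Γ)
    (hsup : Γ ⊆ {x : Fin n → ℝ | 0 < ∑ i, x i}) :
    ∃! t : ℝ, t ∈ Set.Icc (0 : ℝ) ((n : ℝ) - 1) ∧ vecT n t ∈ frontier Γ := by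
  set f : ℝ →ᵃ[ℝ] (Fin n → ℝ) := AffineMap.lineMap (vecT n 0) (vecT n 1)
  have hf : Continuous f := AffineMap.lineMap_continuous
  have hneg : Iio 0 ⊆ f ⁻¹' Γ := fun t ht => by
    simpa [f, ← vecT_eq_lineMap] using hsub (vecT_pos_of_neg n ht)
  have hbdd : f ⁻¹' Γ ⊆ Iio ((n : ℝ) - 1) := fun t ht => by
    have hpos : 0 < ∑ i, vecT n t i := by simpa [f, ← vecT_eq_lineMap] using hsup ht
    rw [sum_vecT n hn] at hpos
    exact mem_Iio.2 (by linarith)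
  have hA : f ⁻¹' Γ = Iio (sSup (f ⁻¹' Γ)) :=
    (hopen.preimage hf).eq_Iio_csSup (hconv.affine_preimage f).isPreconnected
      (fun h => not_bddBelow_Iio (0 : ℝ) (h.mono hneg)) ⟨_, fun _ ht => (hbdd ht).le⟩
  set b := sSup (f ⁻¹' Γ)
  have hfront : ∀ t, vecT n t ∈ frontier Γ ↔ t = b := fun t => by
    rw [vecT_eq_lineMap, ← mem_preimage, hconv.preimage_frontier_eq_frontier_preimage hopen f hf
      (nonempty_Iio.mono hneg), hA, frontier_Iio, mem_singleton_iff]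
  refine ⟨b, ⟨⟨?_, ?_⟩, (hfront b).2 rfl⟩, fun t ht => (hfront t).1 ht.2⟩
  · exact Iio_subset_Iio_iff.1 (hA ▸ hneg)
  · exact Iio_subset_Iio_iff.1 (hA ▸ hbdd)

/-- For an open convex symmetric cone `Γ` with `Γ_n ⊆ Γ ⊆ Γ_1`, there is a unique
`t ∈ [0, n-1]` with `(-t, 1, ..., 1) ∈ ∂Γ`. -/
theorem exists_unique_muPlus (n : ℕ) (hn : 1 ≤ n) (Γ : Set (Fin n → ℝ))
    (hopen : IsOpen Γ) (hconv : Convex ℝ Γ)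
    (hsymm : ∀ σ : Equiv.Perm (Fin n), ∀ x ∈ Γ, (fun i => x (σ i)) ∈ Γ)
    (hcone : ∀ s : ℝ, 0 < s → ∀ x ∈ Γ, s • x ∈ Γ)
    (hsub : {x : Fin n → ℝ | ∀ i, 0 < x i} ⊆ Γ)
    (hsup : Γ ⊆ {x : Fin n → ℝ | 0 < ∑ i, x i}) :
    ∃! t : ℝ, t ∈ Set.Icc (0 : ℝ) ((n : ℝ) - 1) ∧ vecT n t ∈ frontier Γ :=
  exists_unique_muPlus_general n hn Γ hopen hconv hsub hsup
end

section
/- Let Γ ⊂ ℝ^n be an open convex symmetric cone with vertex at the origin satisfying Γ_n ⊆ Γ ⊆ Γ_1, and let f : Γ → ℝ be a C^1 function that is positive, concave, homogeneous of degree one, and has positive partial derivatives f_{λ_i} > 0 on Γ. Then Σ_{i=1}^n f_{λ_i}(λ) ≥ f(1, ..., 1) > 0 for all λ ∈ Γ. -/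
/-!
Concavity and homogeneity make `f` superadditive on `Γ`, so `f x + f e ≤ f (x + e)` for
`e = (1, …, 1)`, while the tangent plane at `x` gives `f (x + e) ≤ f x + f'(x) e`.
Hence `f e ≤ f'(x) e = Σ_i f_{λ_i}(x)`.
-/

section Cone

variable {E : Type*} [AddCommGroup E] [Module ℝ E] {s : Set E} {a b : E}

lemma Convex.add_mem_of_smul_mem (hs : Convex ℝ s)
    (hcone : ∀ c : ℝ, 0 < c → ∀ x ∈ s, c • x ∈ s) (ha : a ∈ s) (hb : b ∈ s) : a + b ∈ s := by
  have hmid : (1 / 2 : ℝ) • a + (1 / 2 : ℝ) • b ∈ s :=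
    hs ha hb (by norm_num) (by norm_num) (by norm_num)
  simpa [smul_add, smul_smul] using hcone 2 two_pos _ hmid

lemma ConcaveOn.add_le_of_map_smul {f : E → ℝ} (hf : ConcaveOn ℝ s f)
    (hhom : ∀ c : ℝ, 0 < c → ∀ x ∈ s, f (c • x) = c * f x) (ha : a ∈ s) (hb : b ∈ s) :
    f a + f b ≤ f (a + b) := by
  set m := (1 / 2 : ℝ) • a + (1 / 2 : ℝ) • b
  have hmid : m ∈ s := hf.1 ha hb (by norm_num) (by norm_num) (by norm_num)
  have hconc : (1 / 2 : ℝ) • f a + (1 / 2 : ℝ) • f b ≤ f m :=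
    hf.2 ha hb (by norm_num) (by norm_num) (by norm_num)
  have hsum : a + b = (2 : ℝ) • m := by simp only [m, smul_add, smul_smul]; norm_num
  rw [hsum, hhom 2 two_pos m hmid]
  simp only [smul_eq_mul] at hconc
  linarith

end Cone

lemma ConcaveOn.le_add_of_hasFDerivAt {E : Type*} [NormedAddCommGroup E] [NormedSpace ℝ E]
    {s : Set E} {f : E → ℝ} {f' : E →L[ℝ] ℝ} {x y : E} (hf : ConcaveOn ℝ s f)
    (hx : x ∈ s) (hy : y ∈ s) (hf' : HasFDerivAt f f' x) :
    f y ≤ f x + f' (y - x) := by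
  set ℓ : ℝ →ᵃ[ℝ] E := AffineMap.lineMap x y
  have hline : ConcaveOn ℝ (ℓ ⁻¹' s) (f ∘ ℓ) := hf.comp_affineMap ℓ
  have hderiv : HasDerivAt (f ∘ ℓ) (f' (y - x)) 0 := by
    rw [← AffineMap.lineMap_apply_zero (k := ℝ) x y] at hf'
    exact hf'.comp_hasDerivAt 0 AffineMap.hasDerivAt_lineMap
  have hslope := hline.slope_le_of_hasDerivAt (x := 0) (y := 1) (by simpa [ℓ] using hx)
    (by simpa [ℓ] using hy) one_pos hderiv
  simp only [ℓ, slope_def_field, Function.comp_apply, AffineMap.lineMap_apply_zero,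
    AffineMap.lineMap_apply_one, sub_zero, div_one] at hslope
  linarith

theorem sum_partials_ge_general (n : ℕ) (Γ : Set (Fin n → ℝ))
    (hcone : ∀ s : ℝ, 0 < s → ∀ x ∈ Γ, s • x ∈ Γ)
    (hsub : {x : Fin n → ℝ | ∀ i, 0 < x i} ⊆ Γ)
    (f : (Fin n → ℝ) → ℝ) (f' : (Fin n → ℝ) → ((Fin n → ℝ) →L[ℝ] ℝ))
    (hderiv : ∀ x ∈ Γ, HasFDerivAt f (f' x) x)
    (hpos : ∀ x ∈ Γ, 0 < f x)
    (hconc : ConcaveOn ℝ Γ f)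
    (hhom : ∀ s : ℝ, 0 < s → ∀ x ∈ Γ, f (s • x) = s * f x) :
    (0 < f (fun _ => 1)) ∧
      ∀ x ∈ Γ, f (fun _ => 1) ≤ ∑ i, f' x (Pi.single i 1) := by
  set e : Fin n → ℝ := fun _ => 1
  have he : e ∈ Γ := hsub fun _ => one_pos
  refine ⟨hpos e he, fun x hx => ?_⟩
  have hxe : x + e ∈ Γ := hconc.1.add_mem_of_smul_mem hcone hx he
  have hsum : ∑ i, f' x (Pi.single i 1) = f' x e := by
    rw [← map_sum, Finset.univ_sum_single e]
  calc f e ≤ f (x + e) - f x := by linarith [hconc.add_le_of_map_smul hhom hx he]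
    _ ≤ f' x (x + e - x) := by linarith [hconc.le_add_of_hasFDerivAt hx hxe (hderiv x hx)]
    _ = ∑ i, f' x (Pi.single i 1) := by rw [add_sub_cancel_left, hsum]

/-- For an open convex symmetric cone `Γ_n ⊆ Γ ⊆ Γ_1` and `f : Γ → ℝ` that is `C^1`,
positive, concave, homogeneous of degree one, with positive partial derivatives, one has
`Σ_i f_{λ_i}(λ) ≥ f(1,...,1) > 0` on `Γ`. -/
theorem sum_partials_ge (n : ℕ) (hn : 1 ≤ n) (Γ : Set (Fin n → ℝ))
    (hopen : IsOpen Γ) (hconv : Convex ℝ Γ)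
    (hsymm : ∀ σ : Equiv.Perm (Fin n), ∀ x ∈ Γ, (fun i => x (σ i)) ∈ Γ)
    (hcone : ∀ s : ℝ, 0 < s → ∀ x ∈ Γ, s • x ∈ Γ)
    (hsub : {x : Fin n → ℝ | ∀ i, 0 < x i} ⊆ Γ)
    (hsup : Γ ⊆ {x : Fin n → ℝ | 0 < ∑ i, x i})
    (f : (Fin n → ℝ) → ℝ) (f' : (Fin n → ℝ) → ((Fin n → ℝ) →L[ℝ] ℝ))
    (hderiv : ∀ x ∈ Γ, HasFDerivAt f (f' x) x)
    (hpos : ∀ x ∈ Γ, 0 < f x)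
    (hconc : ConcaveOn ℝ Γ f)
    (hhom : ∀ s : ℝ, 0 < s → ∀ x ∈ Γ, f (s • x) = s * f x)
    (hmono : ∀ x ∈ Γ, ∀ i, 0 < f' x (Pi.single i 1)) :
    (0 < f (fun _ => 1)) ∧
      ∀ x ∈ Γ, f (fun _ => 1) ≤ ∑ i, f' x (Pi.single i 1) :=
  sum_partials_ge_general n Γ hcone hsub f f' hderiv hpos hconc hhom
end
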